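/- Let n ≥ 1, let Q₁ and Q₂ be invertible symmetric n×n matrices with rational entries, and let T ∈ GL(n,ℚ) satisfy TᵗQ₁T = Q₂. For an invertible symmetric rational matrix Q, let O(Q,ℤ) denote the subgroup of GL(n,ℚ) consisting of all matrices A such that A has integer entries, det A = ±1, and AᵗQA = Q. Then the conjugate subgroup T⁻¹ O(Q₁,ℤ) T is commensurable with O(Q₂,ℤ); that is, their intersection has finite index in each of them. -/

import Mathlib

open Matrix
open scoped Classical

/-- `O(Q, ℤ)`: the subgroup of `GL(n, ℚ)` consisting of the matrices `A` with integer
entries, `det A = ±1`, and `Aᵀ * Q * A = Q`. -/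
def intOrthogonalGroup (n : ℕ) (Q : Matrix (Fin n) (Fin n) ℚ) :
    Subgroup (GL (Fin n) ℚ) where
  carrier := {A | (∃ B : Matrix (Fin n) (Fin n) ℤ,
        (A : Matrix (Fin n) (Fin n) ℚ) = B.map (Int.castRingHom ℚ)) ∧
      ((A : Matrix (Fin n) (Fin n) ℚ).det = 1 ∨ (A : Matrix (Fin n) (Fin n) ℚ).det = -1) ∧
      (A : Matrix (Fin n) (Fin n) ℚ)ᵀ * Q * (A : Matrix (Fin n) (Fin n) ℚ) = Q}
  one_mem' := by
    refine ⟨⟨1, ?_⟩, Or.inl ?_, ?_⟩ <;> simp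
  mul_mem' := by
    rintro A₁ A₂ ⟨⟨B₁, hB₁⟩, hd₁, ho₁⟩ ⟨⟨B₂, hB₂⟩, hd₂, ho₂⟩
    refine ⟨⟨B₁ * B₂, ?_⟩, ?_, ?_⟩
    · rw [Units.val_mul, hB₁, hB₂, Matrix.map_mul]
    · rw [Units.val_mul, Matrix.det_mul]
      rcases hd₁ with h₁ | h₁ <;> rcases hd₂ with h₂ | h₂ <;> rw [h₁, h₂] <;> norm_num
    · rw [Units.val_mul, Matrix.transpose_mul]
      calc A₂.valᵀ * A₁.valᵀ * Q * (A₁.val * A₂.val)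
          = A₂.valᵀ * (A₁.valᵀ * Q * A₁.val) * A₂.val := by noncomm_ring
        _ = A₂.valᵀ * Q * A₂.val := by rw [ho₁]
        _ = Q := ho₂
  inv_mem' := by
    rintro A ⟨⟨B, hB⟩, hd, ho⟩
    have hmul : A.val * (A⁻¹).val = 1 := by
      rw [← Units.val_mul, mul_inv_cancel, Units.val_one]
    have hinv : (A⁻¹).val * A.val = 1 := by
      rw [← Units.val_mul, inv_mul_cancel, Units.val_one]
    refine ⟨?_, ?_, ?_⟩
    · -- integrality of the inverse
      have hBdet : (B.det : ℚ) = A.val.det := by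
        have h := RingHom.map_det (Int.castRingHom ℚ) B
        rw [hB]
        simpa using h
      have hBu : IsUnit B.det := by
        rcases hd with h | h
        · have h1 : (B.det : ℚ) = 1 := by rw [hBdet, h]
          have h2 : B.det = 1 := by exact_mod_cast h1
          rw [h2]; exact isUnit_one
        · have h1 : (B.det : ℚ) = -1 := by rw [hBdet, h]
          have h2 : B.det = -1 := by exact_mod_cast h1
          rw [h2]; exact (isUnit_one).neg
      refine ⟨B⁻¹, ?_⟩
      have h1 : A.val * B⁻¹.map (Int.castRingHom ℚ) = 1 := by
        rw [hB, ← Matrix.map_mul, Matrix.mul_nonsing_inv B hBu]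
        simp
      exact Units.inv_eq_of_mul_eq_one_right h1
    · -- determinant of the inverse is ±1
      have hdetmul : (A⁻¹).val.det * A.val.det = 1 := by
        rw [← Matrix.det_mul, hinv, Matrix.det_one]
      rcases hd with h | h
      · left; rw [h, mul_one] at hdetmul; exact hdetmul
      · right; rw [h] at hdetmul; linarith
    · -- the inverse is orthogonal
      calc (A⁻¹).valᵀ * Q * (A⁻¹).val
          = (A⁻¹).valᵀ * (A.valᵀ * Q * A.val) * (A⁻¹).val := by rw [ho]
        _ = (A.val * (A⁻¹).val)ᵀ * Q * (A.val * (A⁻¹).val) := by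
            rw [Matrix.transpose_mul]; noncomm_ring
        _ = Q := by rw [hmul]; simp


lemma exists_denom_clear {n : ℕ} (M : Matrix (Fin n) (Fin n) ℚ) :
    ∃ N : ℕ, 0 < N ∧ ∃ B : Matrix (Fin n) (Fin n) ℤ,
      (N : ℚ) • M = B.map (Int.castRingHom ℚ) := by
  refine ⟨∏ i : Fin n, ∏ j : Fin n, (M i j).den, by positivity, ?_⟩
  set N : ℕ := ∏ i : Fin n, ∏ j : Fin n, (M i j).den with hN
  have hdvd : ∀ i j, (M i j).den ∣ N := by
    intro i j
    apply dvd_trans (b := ∏ j : Fin n, (M i j).den)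
    · exact Finset.dvd_prod_of_mem _ (Finset.mem_univ j)
    · exact Finset.dvd_prod_of_mem (fun i => ∏ j : Fin n, (M i j).den) (Finset.mem_univ i)
  refine ⟨fun i j => (M i j).num * (N / (M i j).den : ℕ), ?_⟩
  ext i j
  simp only [Matrix.smul_apply, Matrix.map_apply, Int.coe_castRingHom, smul_eq_mul]
  obtain ⟨c, hc⟩ := hdvd i j
  show ((N : ℕ) : ℚ) * M i j = (((M i j).num * ((N / (M i j).den : ℕ) : ℤ) : ℤ) : ℚ)
  rw [hc, Nat.mul_div_cancel_left c (M i j).pos]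
  push_cast
  rw [mul_comm ((M i j).den : ℚ) (c : ℚ), mul_assoc, Rat.den_mul_eq_num]
  ring

lemma key_conj {n : ℕ} (Q Q' : Matrix (Fin n) (Fin n) ℚ) (S : GL (Fin n) ℚ)
    (hS : (S : Matrix (Fin n) (Fin n) ℚ)ᵀ * Q * S = Q')
    (N : ℕ) (U V : Matrix (Fin n) (Fin n) ℤ)
    (hU : (N : ℚ) • (S : Matrix (Fin n) (Fin n) ℚ) = U.map (Int.castRingHom ℚ))
    (hV : (N : ℚ) • ((S⁻¹ : GL (Fin n) ℚ) : Matrix (Fin n) (Fin n) ℚ) = V.map (Int.castRingHom ℚ))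
    (A : GL (Fin n) ℚ) (hA : A ∈ intOrthogonalGroup n Q')
    (C : Matrix (Fin n) (Fin n) ℤ)
    (hC : (A : Matrix (Fin n) (Fin n) ℚ) =
      1 + ((N ^ 2 : ℕ) : ℚ) • C.map (Int.castRingHom ℚ)) :
    S * A * S⁻¹ ∈ intOrthogonalGroup n Q := by
  obtain ⟨-, hdet, horth⟩ := hA
  set s : Matrix (Fin n) (Fin n) ℚ := (S : Matrix (Fin n) (Fin n) ℚ) with hs
  set si : Matrix (Fin n) (Fin n) ℚ := ((S⁻¹ : GL (Fin n) ℚ) : Matrix (Fin n) (Fin n) ℚ) with hsi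
  set a : Matrix (Fin n) (Fin n) ℚ := (A : Matrix (Fin n) (Fin n) ℚ) with ha
  have hmulSS : s * si = 1 := by
    rw [hs, hsi, ← Units.val_mul, mul_inv_cancel, Units.val_one]
  have hval : ((S * A * S⁻¹ : GL (Fin n) ℚ) : Matrix (Fin n) (Fin n) ℚ) = s * a * si := by
    simp [Units.val_mul, hs, hsi, ha]
  set Cq : Matrix (Fin n) (Fin n) ℚ := C.map (Int.castRingHom ℚ) with hCq
  refine ⟨⟨1 + U * C * V, ?_⟩, ?_, ?_⟩
  · rw [hval, hC]
    have expand : s * (1 + ((N ^ 2 : ℕ) : ℚ) • Cq) * si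
        = 1 + ((N : ℚ) • s) * Cq * ((N : ℚ) • si) := by
      rw [mul_add, add_mul, mul_one, hmulSS]
      congr 1
      simp only [smul_mul_assoc, mul_smul_comm, smul_smul]
      push_cast
      ring_nf
    rw [expand, hU, hV, hCq, ← Matrix.map_mul, ← Matrix.map_mul]
    ext i j
    simp [Matrix.add_apply, Matrix.map_apply, Matrix.one_apply]
  · have h1 : s.det * si.det = 1 := by
      rw [← Matrix.det_mul, hmulSS, Matrix.det_one]
    rw [hval, Matrix.det_mul, Matrix.det_mul]
    rcases hdet with h | h
    · left; rw [h]; nlinarith [h1]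
    · right; rw [h]; nlinarith [h1]
  · rw [hval]
    calc (s * a * si)ᵀ * Q * (s * a * si)
        = siᵀ * (aᵀ * (sᵀ * Q * s) * a) * si := by
          rw [Matrix.transpose_mul, Matrix.transpose_mul]; noncomm_ring
      _ = siᵀ * Q' * si := by rw [hS, horth]
      _ = Q := by
          rw [← hS]
          calc siᵀ * (sᵀ * Q * s) * si
              = (s * si)ᵀ * Q * (s * si) := by
                rw [Matrix.transpose_mul]; noncomm_ring
            _ = Q := by rw [hmulSS]; simp

noncomputable def intRep {n : ℕ} {Q : Matrix (Fin n) (Fin n) ℚ}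
    (A : intOrthogonalGroup n Q) : Matrix (Fin n) (Fin n) ℤ :=
  A.2.1.choose

lemma intRep_spec {n : ℕ} {Q : Matrix (Fin n) (Fin n) ℚ} (A : intOrthogonalGroup n Q) :
    ((A : GL (Fin n) ℚ) : Matrix (Fin n) (Fin n) ℚ) = (intRep A).map (Int.castRingHom ℚ) :=
  A.2.1.choose_spec

lemma intMap_inj {n : ℕ} (B₁ B₂ : Matrix (Fin n) (Fin n) ℤ)
    (h : B₁.map (Int.castRingHom ℚ) = B₂.map (Int.castRingHom ℚ)) : B₁ = B₂ := by
  ext i j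
  have := congrFun (congrFun h i) j
  simpa using this

lemma exists_cong_subgroup (n m : ℕ) (hm : m ≠ 0) (Q : Matrix (Fin n) (Fin n) ℚ) :
    ∃ L : Subgroup (GL (Fin n) ℚ), L ≤ intOrthogonalGroup n Q ∧
      L.relIndex (intOrthogonalGroup n Q) ≠ 0 ∧
      ∀ A ∈ L, ∃ C : Matrix (Fin n) (Fin n) ℤ,
        (A : Matrix (Fin n) (Fin n) ℚ) = 1 + (m : ℚ) • C.map (Int.castRingHom ℚ) := by
  haveI : NeZero m := ⟨hm⟩
  set φ : Matrix (Fin n) (Fin n) ℤ →+* Matrix (Fin n) (Fin n) (ZMod m) :=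
    (Int.castRingHom (ZMod m)).mapMatrix with hφ
  have hred : ∀ A B : intOrthogonalGroup n Q, intRep (A * B) = intRep A * intRep B := by
    intro A B
    apply intMap_inj
    rw [Matrix.map_mul, ← intRep_spec, ← intRep_spec, ← intRep_spec]
    simp
  have hone : intRep (1 : intOrthogonalGroup n Q) = 1 := by
    apply intMap_inj
    rw [← intRep_spec]
    simp
  let f : intOrthogonalGroup n Q →* Matrix (Fin n) (Fin n) (ZMod m) :=
    { toFun := fun A => φ (intRep A)
      map_one' := by show φ (intRep 1) = 1; rw [hone]; simp
      map_mul' := by intro A B; show φ (intRep (A * B)) = φ (intRep A) * φ (intRep B); rw [hred, _root_.map_mul] }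
  let g := f.toHomUnits
  refine ⟨(g.ker.map (intOrthogonalGroup n Q).subtype), Subgroup.map_subtype_le _, ?_, ?_⟩
  · rw [Subgroup.relIndex, Subgroup.subgroupOf,
      Subgroup.comap_map_eq_self_of_injective (by exact Subtype.coe_injective)]
    haveI : Finite (intOrthogonalGroup n Q ⧸ g.ker) :=
      Finite.of_equiv _ (QuotientGroup.quotientKerEquivRange g).symm.toEquiv
    exact Subgroup.index_ne_zero_of_finite
  · rintro A ⟨⟨A', hA'⟩, hker, rfl⟩
    set R := intRep (⟨A', hA'⟩ : intOrthogonalGroup n Q) with hR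
    have hgA : φ R = 1 := by
      have h1 := MonoidHom.mem_ker.mp hker
      have h2 := congrArg Units.val h1
      simpa [g, f] using h2
    have hzero : φ (R - 1) = 0 := by rw [map_sub, hgA, _root_.map_one, sub_self]
    have hentry : ∀ i j, ((m : ℤ)) ∣ (R - 1) i j := by
      intro i j
      apply (ZMod.intCast_zmod_eq_zero_iff_dvd _ m).mp
      have := congrFun (congrFun (congrArg (fun M => M) hzero) i) j
      simpa [hφ, RingHom.mapMatrix_apply, Matrix.map_apply] using this
    refine ⟨Matrix.of fun i j => ((R - 1) i j) / m, ?_⟩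
    have hRsplit : R = 1 + (m : ℤ) • Matrix.of (fun i j => ((R - 1) i j) / m) := by
      ext i j
      rw [Matrix.add_apply, Matrix.smul_apply]
      have h3 := Int.mul_ediv_cancel' (hentry i j)
      simp only [smul_eq_mul, Matrix.of_apply]
      rw [h3, Matrix.sub_apply]
      ring
    have h4 := intRep_spec (⟨A', hA'⟩ : intOrthogonalGroup n Q)
    rw [← hR, hRsplit] at h4
    have h6 : (((⟨A', hA'⟩ : intOrthogonalGroup n Q) : GL (Fin n) ℚ) : Matrix (Fin n) (Fin n) ℚ)
        = 1 + (m : ℚ) • ((Matrix.of fun i j => ((R - 1) i j) / m).map (Int.castRingHom ℚ)) := by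
      rw [h4]
      ext i j
      simp [Matrix.map_apply, Matrix.add_apply, Matrix.smul_apply, Matrix.one_apply]
    exact h6

/-- If `Tᵀ Q₁ T = Q₂` with `T ∈ GL(n, ℚ)` and `Q₁`, `Q₂` invertible symmetric rational
matrices, then `T⁻¹ O(Q₁, ℤ) T` and `O(Q₂, ℤ)` are commensurable: their intersection
has finite index in each. -/
theorem conj_intOrthogonalGroup_commensurable
    (n : ℕ) (hn : 1 ≤ n) (Q₁ Q₂ : Matrix (Fin n) (Fin n) ℚ)
    (h₁symm : Q₁.IsSymm) (h₂symm : Q₂.IsSymm)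
    (h₁nondeg : IsUnit Q₁.det) (h₂nondeg : IsUnit Q₂.det)
    (T : GL (Fin n) ℚ)
    (hT : (T : Matrix (Fin n) (Fin n) ℚ)ᵀ * Q₁ * T = Q₂) :
    Subgroup.Commensurable
      (Subgroup.map (MulAut.conj T⁻¹).toMonoidHom (intOrthogonalGroup n Q₁))
      (intOrthogonalGroup n Q₂) := by
  obtain ⟨N₁, hN₁, B₁, hB₁⟩ := exists_denom_clear ((T : GL (Fin n) ℚ) : Matrix (Fin n) (Fin n) ℚ)
  obtain ⟨N₂, hN₂, B₂, hB₂⟩ := exists_denom_clear ((T⁻¹ : GL (Fin n) ℚ) : Matrix (Fin n) (Fin n) ℚ)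
  set N : ℕ := N₁ * N₂ with hN
  have hU : ((N : ℕ) : ℚ) • ((T : GL (Fin n) ℚ) : Matrix (Fin n) (Fin n) ℚ)
      = ((N₂ : ℤ) • B₁).map (Int.castRingHom ℚ) := by
    rw [show ((N : ℕ) : ℚ) = (N₂ : ℚ) * (N₁ : ℚ) by push_cast [hN]; ring, mul_smul, hB₁]
    ext i j
    simp only [Matrix.smul_apply, Matrix.map_apply, Int.coe_castRingHom, smul_eq_mul]
    push_cast
    ring
  have hV : ((N : ℕ) : ℚ) • ((T⁻¹ : GL (Fin n) ℚ) : Matrix (Fin n) (Fin n) ℚ)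
      = ((N₁ : ℤ) • B₂).map (Int.castRingHom ℚ) := by
    rw [show ((N : ℕ) : ℚ) = (N₁ : ℚ) * (N₂ : ℚ) by push_cast [hN]; ring, mul_smul, hB₂]
    ext i j
    simp only [Matrix.smul_apply, Matrix.map_apply, Int.coe_castRingHom, smul_eq_mul]
    push_cast
    ring
  have hm : N ^ 2 ≠ 0 := by positivity
  obtain ⟨L₁, hL₁le, hL₁idx, hL₁cong⟩ := exists_cong_subgroup n (N ^ 2) hm Q₁
  obtain ⟨L₂, hL₂le, hL₂idx, hL₂cong⟩ := exists_cong_subgroup n (N ^ 2) hm Q₂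
  set Γ₁ : Subgroup (GL (Fin n) ℚ) :=
    Subgroup.map (MulAut.conj T⁻¹).toMonoidHom (intOrthogonalGroup n Q₁) with hΓ₁
  set Γ₂ : Subgroup (GL (Fin n) ℚ) := intOrthogonalGroup n Q₂ with hΓ₂
  -- hS' : (T⁻¹)ᵀ Q₂ T⁻¹ = Q₁
  have hTT : ((T : GL (Fin n) ℚ) : Matrix (Fin n) (Fin n) ℚ) *
      ((T⁻¹ : GL (Fin n) ℚ) : Matrix (Fin n) (Fin n) ℚ) = 1 := by
    rw [← Units.val_mul, mul_inv_cancel, Units.val_one]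
  have hS' : ((T⁻¹ : GL (Fin n) ℚ) : Matrix (Fin n) (Fin n) ℚ)ᵀ * Q₂ *
      ((T⁻¹ : GL (Fin n) ℚ) : Matrix (Fin n) (Fin n) ℚ) = Q₁ := by
    rw [← hT]
    calc ((T⁻¹ : GL (Fin n) ℚ) : Matrix (Fin n) (Fin n) ℚ)ᵀ *
          (((T : GL (Fin n) ℚ) : Matrix (Fin n) (Fin n) ℚ)ᵀ * Q₁ * T) *
          ((T⁻¹ : GL (Fin n) ℚ) : Matrix (Fin n) (Fin n) ℚ)
        = (((T : GL (Fin n) ℚ) : Matrix (Fin n) (Fin n) ℚ) *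
            ((T⁻¹ : GL (Fin n) ℚ) : Matrix (Fin n) (Fin n) ℚ))ᵀ * Q₁ *
          (((T : GL (Fin n) ℚ) : Matrix (Fin n) (Fin n) ℚ) *
            ((T⁻¹ : GL (Fin n) ℚ) : Matrix (Fin n) (Fin n) ℚ)) := by
          rw [Matrix.transpose_mul]; noncomm_ring
      _ = Q₁ := by rw [hTT]; simp
  -- L₂ ≤ Γ₁
  have hL₂Γ₁ : L₂ ≤ Γ₁ := by
    intro A hA
    obtain ⟨C, hC⟩ := hL₂cong A hA
    have hmem : T * A * T⁻¹ ∈ intOrthogonalGroup n Q₁ :=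
      key_conj Q₁ Q₂ T hT N ((N₂ : ℤ) • B₁) ((N₁ : ℤ) • B₂) hU hV A (hL₂le hA) C hC
    rw [hΓ₁]
    refine ⟨T * A * T⁻¹, hmem, ?_⟩
    simp [MulAut.conj_apply]
    group
  -- L₁' ≤ Γ₂
  set φ := (MulAut.conj (T⁻¹ : GL (Fin n) ℚ)).toMonoidHom with hφ
  have hL₁'Γ₂ : L₁.map φ ≤ Γ₂ := by
    rintro _ ⟨B, hB, rfl⟩
    obtain ⟨C, hC⟩ := hL₁cong B hB
    have hV' : ((N : ℕ) : ℚ) • (((T⁻¹)⁻¹ : GL (Fin n) ℚ) : Matrix (Fin n) (Fin n) ℚ)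
        = ((N₂ : ℤ) • B₁).map (Int.castRingHom ℚ) := by rw [inv_inv]; exact hU
    have hmem : T⁻¹ * B * (T⁻¹)⁻¹ ∈ intOrthogonalGroup n Q₂ :=
      key_conj Q₂ Q₁ T⁻¹ hS' N ((N₁ : ℤ) • B₂) ((N₂ : ℤ) • B₁)
        hV hV' B (hL₁le hB) C hC
    simpa [hφ, MulAut.conj_apply] using hmem
  have hL₁'Γ₁ : (L₁.map φ).relIndex Γ₁ ≠ 0 := by
    rw [hΓ₁, hφ, Subgroup.map_equiv_eq_comap_symm', Subgroup.map_equiv_eq_comap_symm',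
      Subgroup.relIndex_comap,
      Subgroup.map_comap_eq_self_of_surjective (MulEquiv.surjective _)]
    exact hL₁idx
  constructor
  · exact fun h => hL₂idx (Nat.eq_zero_of_zero_dvd
      (h ▸ Subgroup.relIndex_dvd_of_le_left Γ₂ hL₂Γ₁))
  · exact fun h => hL₁'Γ₁ (Nat.eq_zero_of_zero_dvd
      (h ▸ Subgroup.relIndex_dvd_of_le_left Γ₁ hL₁'Γ₂))
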